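/- arXiv:2501.11883 — 2 statements merged into one kernel-verified Lean document; each statement's English description precedes it below -/
import Mathlib

section
/- Let 0 < q < 1 and j ≥ 1. Then the conditional entropy of an i.i.d. Bernoulli(q) vector of length 2^j given odd parity satisfies the recursion H₁^j(q) = 1 + H₀^{j−1}(q) + H₁^{j−1}(q). -/
open Finset

/-- Hamming weight of a binary string `e ∈ {0,1}^n`. -/
def wt {n : ℕ} (e : Fin n → Bool) : ℕ := (Finset.univ.filter fun i => e i = true).card

/-- i.i.d. Bernoulli(q) probability of the binary string `e ∈ {0,1}^n`. -/
noncomputable def Pq (q : ℝ) {n : ℕ} (e : Fin n → Bool) : ℝ :=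
  q ^ wt e * (1 - q) ^ (n - wt e)

/-- `p̄_j(q) = (1 − (1−2q)^{2^j})/2`. -/
noncomputable def pbar (q : ℝ) (j : ℕ) : ℝ := (1 - (1 - 2 * q) ^ (2 ^ j)) / 2

/-- `q̄_j(q) = p̄_{j−1}(q)²/(1 − p̄_j(q))`. -/
noncomputable def qbar (q : ℝ) (j : ℕ) : ℝ := (pbar q (j - 1)) ^ 2 / (1 - pbar q j)

/-- Binary entropy function (base 2), with `h(0) = h(1) = 0`. -/
noncomputable def binEnt (x : ℝ) : ℝ := -(x * Real.logb 2 x) - (1 - x) * Real.logb 2 (1 - x)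

/-- `Π_b^j(q)`: probability that an i.i.d. Bernoulli(q) vector of length `2^j` has parity `b`. -/
noncomputable def Pib (q : ℝ) (j : ℕ) (b : ℕ) : ℝ := if b = 1 then pbar q j else 1 - pbar q j

/-- `H_b^j(q)`: Shannon entropy (base 2) of an i.i.d. Bernoulli(q) vector of length `2^j`
conditioned on its parity being `b`. -/
noncomputable def Hcond (q : ℝ) (j : ℕ) (b : ℕ) : ℝ :=
  -∑ e ∈ Finset.univ.filter (fun e : Fin (2 ^ j) → Bool => wt e % 2 = b),
      (Pq q e / Pib q j b) * Real.logb 2 (Pq q e / Pib q j b)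

/-!
Split a string of length `2^(k+1)` into its two halves of length `2^k`: it has odd parity exactly
when one half is even and the other odd, and `Pq` factorises over the halves. Since
`Π₁^{k+1} = 2 Π₀^k Π₁^k`, conditioned on odd parity the string is the fair mixture of the product
laws "even ⊗ odd" and "odd ⊗ even", which have disjoint supports; its entropy is therefore one bit
plus the entropy `H₀^k + H₁^k` shared by both components.
-/

def parityClass (n b : ℕ) : Finset (Fin n → Bool) := univ.filter fun e => wt e % 2 = b

lemma wt_eq_sum {n : ℕ} (e : Fin n → Bool) : wt e = ∑ i, if e i then 1 else 0 := by
  rw [wt, card_filter]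

lemma prod_ite_eq_pow_wt {R : Type*} [CommMonoid R] (a c : R) {n : ℕ} (e : Fin n → Bool) :
    ∏ i, (if e i then a else c) = a ^ wt e * c ^ (n - wt e) := by
  have hcard := card_filter_add_card_filter_not (s := univ) (fun i => e i = true)
  rw [card_univ, Fintype.card_fin] at hcard
  rw [prod_ite, prod_const, prod_const, wt]
  congr 2
  omega

lemma sum_pow_wt_mul_pow {R : Type*} [CommSemiring R] (a c : R) (n : ℕ) :
    ∑ e : Fin n → Bool, a ^ wt e * c ^ (n - wt e) = (a + c) ^ n := by
  rw [show a + c = ∑ b : Bool, if b then a else c by simp, Fintype.sum_pow]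
  simp only [prod_ite_eq_pow_wt]

lemma Pq_eq_prod (q : ℝ) {n : ℕ} (e : Fin n → Bool) :
    Pq q e = ∏ i, if e i then q else 1 - q :=
  (prod_ite_eq_pow_wt q (1 - q) e).symm

lemma sum_neg_one_pow_mul_Pq (q : ℝ) (n : ℕ) :
    ∑ e : Fin n → Bool, (-1) ^ wt e * Pq q e = (1 - 2 * q) ^ n := by
  simp only [Pq, ← mul_assoc, ← mul_pow, sum_pow_wt_mul_pow]
  ring

lemma sum_Pq (q : ℝ) (n : ℕ) : ∑ e : Fin n → Bool, Pq q e = 1 := by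
  simp only [Pq, sum_pow_wt_mul_pow, add_sub_cancel, one_pow]

lemma sum_parityClass_Pq (q : ℝ) {b : ℕ} (hb : b < 2) (n : ℕ) :
    ∑ e ∈ parityClass n b, Pq q e = (1 + (-1) ^ b * (1 - 2 * q) ^ n) / 2 := by
  -- the indicator of `w ≡ b (mod 2)` is `(1 + (-1)^b (-1)^w) / 2`
  have hind (w : ℕ) (x : ℝ) :
      (if w % 2 = b then x else 0) = (x + (-1) ^ b * ((-1) ^ w * x)) / 2 := by
    rw [neg_one_pow_eq_pow_mod_two (n := w)]
    interval_cases b <;> rcases Nat.mod_two_eq_zero_or_one w with h | h <;> simp [h]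
  rw [parityClass, sum_filter]
  simp only [hind, ← sum_div, sum_add_distrib, ← mul_sum, sum_Pq, sum_neg_one_pow_mul_Pq]

lemma Pib_eq_sum_parityClass (q : ℝ) (j : ℕ) {b : ℕ} (hb : b < 2) :
    Pib q j b = ∑ e ∈ parityClass (2 ^ j) b, Pq q e := by
  rw [sum_parityClass_Pq q hb, Pib, pbar]
  interval_cases b
  · rw [if_neg zero_ne_one]; ring
  · rw [if_pos rfl]; ring

lemma Pib_pos {q : ℝ} (hq0 : 0 < q) (hq1 : q < 1) (j b : ℕ) : 0 < Pib q j b := by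
  have hlt : |(1 - 2 * q) ^ 2 ^ j| < 1 := by
    rw [abs_pow]
    exact pow_lt_one₀ (abs_nonneg _) (abs_lt.mpr ⟨by linarith, by linarith⟩) (by positivity)
  obtain ⟨hlo, hhi⟩ := abs_lt.mp hlt
  unfold Pib pbar
  split_ifs <;> linarith

lemma Pib_succ_one (q : ℝ) (j : ℕ) : Pib q (j + 1) 1 = 2 * Pib q j 0 * Pib q j 1 := by
  simp only [Pib, pbar, if_true, zero_ne_one, if_false, pow_succ, pow_mul]
  ring

lemma wt_append {m n : ℕ} (f : Fin m → Bool) (g : Fin n → Bool) :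
    wt (Fin.append f g) = wt f + wt g := by
  simp only [wt_eq_sum, Fin.sum_univ_add, Fin.append_left, Fin.append_right]

lemma Pq_append (q : ℝ) {m n : ℕ} (f : Fin m → Bool) (g : Fin n → Bool) :
    Pq q (Fin.append f g) = Pq q f * Pq q g := by
  simp only [Pq_eq_prod, Fin.prod_univ_add, Fin.append_left, Fin.append_right]

lemma sum_parityClass_add_one {M : Type*} [AddCommMonoid M] {m n : ℕ}
    (F : (Fin (m + n) → Bool) → M) :
    ∑ e ∈ parityClass (m + n) 1, F e =
      ∑ x ∈ parityClass m 0 ×ˢ parityClass n 1, F (Fin.append x.1 x.2) +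
        ∑ x ∈ parityClass m 1 ×ˢ parityClass n 0, F (Fin.append x.1 x.2) := by
  have hsplit :
      univ.filter (fun x : (Fin m → Bool) × (Fin n → Bool) => (wt x.1 + wt x.2) % 2 = 1) =
        parityClass m 0 ×ˢ parityClass n 1 ∪ parityClass m 1 ×ˢ parityClass n 0 := by
    ext x
    simp only [parityClass, mem_filter, mem_product, mem_union, mem_univ, true_and]
    omega
  have hdisj :
      Disjoint (parityClass m 0 ×ˢ parityClass n 1) (parityClass m 1 ×ˢ parityClass n 0) := by
    simp only [parityClass, disjoint_left, mem_product, mem_filter, mem_univ, true_and]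
    omega
  rw [← sum_union hdisj, ← hsplit]
  refine (sum_equiv (Fin.appendEquiv m n) (fun x => ?_) (fun _ _ => rfl)).symm
  simp only [parityClass, mem_filter, mem_univ, true_and, ← wt_append]
  rfl

open Real

lemma sum_product_negMulLog_const_mul {α β : Type*} {s : Finset α} {t : Finset β}
    {P : α → ℝ} {Q : β → ℝ} (hP : ∑ a ∈ s, P a = 1) (hQ : ∑ b ∈ t, Q b = 1) (c : ℝ) :
    ∑ x ∈ s ×ˢ t, negMulLog (c * (P x.1 * Q x.2)) =
      negMulLog c + c * (∑ a ∈ s, negMulLog (P a) + ∑ b ∈ t, negMulLog (Q b)) := by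
  simp only [sum_product, negMulLog_mul, sum_add_distrib, ← mul_sum, ← sum_mul, hP, hQ]
  ring

-- `negMulLog` obeys `negMulLog_mul` with no positivity side conditions, unlike `x * logb 2 x`.
lemma Hcond_eq_sum_negMulLog (q : ℝ) (j b : ℕ) :
    Hcond q j b = (∑ e ∈ parityClass (2 ^ j) b, negMulLog (Pq q e / Pib q j b)) / log 2 := by
  rw [Hcond, parityClass, sum_div, ← sum_neg_distrib]
  refine sum_congr rfl fun e _ => ?_
  rw [negMulLog, logb]
  ring

lemma sum_parityClass_Pq_div_Pib {q : ℝ} (hq0 : 0 < q) (hq1 : q < 1) (j : ℕ) {b : ℕ}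
    (hb : b < 2) : ∑ e ∈ parityClass (2 ^ j) b, Pq q e / Pib q j b = 1 := by
  rw [← sum_div, ← Pib_eq_sum_parityClass q j hb, div_self (Pib_pos hq0 hq1 j b).ne']

lemma sum_negMulLog_Pq_div_Pib_succ_one {q : ℝ} (hq0 : 0 < q) (hq1 : q < 1) (k : ℕ) :
    ∑ e ∈ parityClass (2 ^ (k + 1)) 1, negMulLog (Pq q e / Pib q (k + 1) 1) =
      log 2 + ∑ e ∈ parityClass (2 ^ k) 0, negMulLog (Pq q e / Pib q k 0) +
        ∑ e ∈ parityClass (2 ^ k) 1, negMulLog (Pq q e / Pib q k 1) := by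
  set C : ℕ → (Fin (2 ^ k) → Bool) → ℝ := fun b e => Pq q e / Pib q k b
  have hC {b : ℕ} (hb : b < 2) : ∑ e ∈ parityClass (2 ^ k) b, C b e = 1 :=
    sum_parityClass_Pq_div_Pib hq0 hq1 k hb
  have h01 : ∀ x ∈ parityClass (2 ^ k) 0 ×ˢ parityClass (2 ^ k) 1,
      negMulLog (Pq q (Fin.append x.1 x.2) / (2 * Pib q k 0 * Pib q k 1)) =
        negMulLog (2⁻¹ * (C 0 x.1 * C 1 x.2)) := fun x _ => by
    rw [Pq_append]; congr 1; ring
  have h10 : ∀ x ∈ parityClass (2 ^ k) 1 ×ˢ parityClass (2 ^ k) 0,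
      negMulLog (Pq q (Fin.append x.1 x.2) / (2 * Pib q k 0 * Pib q k 1)) =
        negMulLog (2⁻¹ * (C 1 x.1 * C 0 x.2)) := fun x _ => by
    rw [Pq_append]; congr 1; ring
  have hhalf : negMulLog 2⁻¹ = 2⁻¹ * log 2 := by rw [negMulLog, log_inv]; ring
  rw [show 2 ^ (k + 1) = 2 ^ k + 2 ^ k by ring, sum_parityClass_add_one, Pib_succ_one,
    sum_congr rfl h01, sum_congr rfl h10, sum_product_negMulLog_const_mul (hC (by norm_num))
    (hC (by norm_num)), sum_product_negMulLog_const_mul (hC (by norm_num)) (hC (by norm_num)),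
    hhalf]
  ring

/-- For `0 < q < 1` and `j ≥ 1`, the conditional entropy of an i.i.d. Bernoulli(q) vector of
length `2^j` given odd parity satisfies `H₁^j(q) = 1 + H₀^{j−1}(q) + H₁^{j−1}(q)`. -/
theorem Hcond_odd_recursion (q : ℝ) (hq0 : 0 < q) (hq1 : q < 1) (j : ℕ) (hj : 1 ≤ j) :
    Hcond q j 1 = 1 + Hcond q (j - 1) 0 + Hcond q (j - 1) 1 := by
  obtain ⟨k, rfl⟩ : ∃ k, j = k + 1 := ⟨j - 1, by omega⟩
  have hlog2 : log 2 ≠ 0 := (log_pos one_lt_two).ne'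
  rw [Nat.add_sub_cancel, Hcond_eq_sum_negMulLog, Hcond_eq_sum_negMulLog, Hcond_eq_sum_negMulLog,
    sum_negMulLog_Pq_div_Pib_succ_one hq0 hq1]
  field_simp
end

section
/- (Second claim of Proposition 1.) Let s ≥ 1, N = 2^s, and define for 0 < q < 1 the function f(q) = (p̄_s(q)/N) · ∑_{i=0}^{s−1} { ∏_{j=1}^{i} (1 − 2q̄_{s−j+1}(q)) } · (1 − h(q̄_{s−i}(q))). Then f is differentiable on a right neighborhood of 0 and lim_{q→0⁺} f′(q) = s. In particular, the slope of the tangent at q = 0 of this lower bound on the OT capacity of the BSC grows without bound as s increases. -/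
/-- The first-round rate term of the polarization-based OT protocol with block length `N = 2^s`:
`f(q) = (p̄_s(q)/N)·∑_{i=0}^{s−1} {∏_{j=1}^{i} (1 − 2q̄_{s−j+1}(q))}·(1 − h(q̄_{s−i}(q)))`. -/
noncomputable def rateF (s : ℕ) (q : ℝ) : ℝ :=
  pbar q s / (2 ^ s : ℝ) *
    ∑ i ∈ Finset.range s,
      (∏ j ∈ Finset.range i, (1 - 2 * qbar q (s - j))) * (1 - binEnt (qbar q (s - i)))


/-!
Write `f = ∑ᵢ aᵢ(q)·(1 − h(q̄_{s−i}(q)))` with `aᵢ = p̄_s/N · ∏_{j ≤ i}(1 − 2q̄_{s−j+1})`.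
The weights `aᵢ` are smooth at `0` with `aᵢ'(0) = 1`, because `p̄_s(0) = 0`, `p̄_s'(0) = N`
and `q̄_j(0) = 0`. Each `q̄_j` is `q²` times a smooth function that does not vanish at `0`, so
`q̄_j' = O(q)` while `h'(q̄_j) = log₂((1 − q̄_j)/q̄_j) = O(log q)`; hence
`(h ∘ q̄_j)' = O(q log q) → 0`, and the derivative of the `i`-th summand tends to `aᵢ'(0) = 1`.
-/
open Real Filter Topology Finset

section ContDiffAt

variable {𝕜 F : Type*} [NontriviallyNormedField 𝕜] [NormedAddCommGroup F] [NormedSpace 𝕜 F]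
  {f : 𝕜 → F} {x : 𝕜} {n : WithTop ℕ∞}

theorem ContDiffAt.eventually_hasDerivAt (hf : ContDiffAt 𝕜 n f x) (hn : n ≠ 0) :
    ∀ᶠ y in 𝓝 x, HasDerivAt f (deriv f y) y :=
  ((hf.of_le (ENat.one_le_iff_ne_zero_withTop.mpr hn)).eventually (by simp)).mono
    fun _ hy ↦ (hy.differentiableAt one_ne_zero).hasDerivAt

theorem ContDiffAt.continuousAt_deriv (hf : ContDiffAt 𝕜 n f x) (hn : n ≠ 0) :
    ContinuousAt (deriv f) x :=
  (hf.continuousAt_fderiv hn).clm_apply continuousAt_const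

end ContDiffAt

theorem tendsto_mul_log_sq_mul_nhdsNE {v w : ℝ → ℝ} (hv : ContinuousAt v 0) (hv₀ : v 0 ≠ 0)
    (hw : ContinuousAt w 0) :
    Tendsto (fun x ↦ x * w x * log (x ^ 2 * v x)) (𝓝[≠] 0) (𝓝 0) := by
  have hid : Tendsto (fun x : ℝ ↦ x) (𝓝[≠] 0) (𝓝 0) := nhdsWithin_le_nhds
  have hmul_log : Tendsto (fun x : ℝ ↦ x * log x) (𝓝[≠] 0) (𝓝 0) := by
    simpa using (continuous_mul_log.tendsto 0).mono_left nhdsWithin_le_nhds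
  have hv' := hv.tendsto.mono_left (nhdsWithin_le_nhds (s := {0}ᶜ))
  have hw' := hw.tendsto.mono_left (nhdsWithin_le_nhds (s := {0}ᶜ))
  have hlim : Tendsto (fun x ↦ 2 * (x * log x) * w x + x * w x * log (v x)) (𝓝[≠] 0) (𝓝 0) := by
    simpa using ((hmul_log.const_mul 2).mul hw').add ((hid.mul hw').mul (hv'.log hv₀))
  refine hlim.congr' ?_
  filter_upwards [self_mem_nhdsWithin, hv'.eventually_ne hv₀] with x hx hvx
  rw [log_mul (pow_ne_zero 2 hx) hvx, log_pow]
  push_cast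
  ring

theorem binEnt_eq_binEntropy_div_log_two : binEnt = fun x ↦ binEntropy x / log 2 := by
  ext x
  simp only [binEnt, binEntropy, logb, log_inv]
  ring

theorem continuous_binEnt : Continuous binEnt := by
  rw [binEnt_eq_binEntropy_div_log_two]
  fun_prop

theorem hasDerivAt_binEnt {x : ℝ} (hx₀ : x ≠ 0) (hx₁ : x ≠ 1) :
    HasDerivAt binEnt ((log (1 - x) - log x) / log 2) x := by
  rw [binEnt_eq_binEntropy_div_log_two]
  exact (hasDerivAt_binEntropy hx₀ hx₁).div_const _

theorem tendsto_deriv_binEnt_sq_mul {v : ℝ → ℝ} (hv : ContDiffAt ℝ 1 v 0) (hv₀ : v 0 ≠ 0) :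
    (∀ᶠ x in 𝓝[≠] 0, DifferentiableAt ℝ (fun x ↦ binEnt (x ^ 2 * v x)) x) ∧
      Tendsto (deriv fun x ↦ binEnt (x ^ 2 * v x)) (𝓝[≠] 0) (𝓝 0) := by
  set g : ℝ → ℝ := fun x ↦ x ^ 2 * v x
  set w : ℝ → ℝ := fun x ↦ 2 * v x + x * deriv v x
  have hv' := hv.continuousAt.tendsto.mono_left (nhdsWithin_le_nhds (s := {0}ᶜ))
  have hg : Tendsto g (𝓝[≠] 0) (𝓝 0) := by
    simpa [g] using ((continuous_pow 2).tendsto (0 : ℝ)).mono_left nhdsWithin_le_nhds |>.mul hv'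
  have hw : ContinuousAt w 0 := (continuousAt_const.mul hv.continuousAt).add
    (continuousAt_id.mul (hv.continuousAt_deriv one_ne_zero))
  -- the factor `x` in `g' = x * w x` tames the logarithmic singularity of `binEnt'` at `0`
  have hderiv : ∀ᶠ x in 𝓝[≠] 0,
      HasDerivAt (binEnt ∘ g) ((log (1 - g x) - log (g x)) / log 2 * (x * w x)) x := by
    filter_upwards [self_mem_nhdsWithin, hv'.eventually_ne hv₀, hg.eventually_ne zero_ne_one,
      (hv.eventually_hasDerivAt one_ne_zero).filter_mono nhdsWithin_le_nhds] with x hx hvx hgx hvd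
    have hg' : HasDerivAt g (x * w x) x :=
      ((hasDerivAt_pow 2 x).mul hvd).congr_deriv (by simp only [w]; push_cast; ring)
    exact (hasDerivAt_binEnt (mul_ne_zero (pow_ne_zero 2 hx) hvx) hgx).comp x hg'
  refine ⟨hderiv.mono fun x hx ↦ hx.differentiableAt, ?_⟩
  refine Tendsto.congr' (hderiv.mono fun x hx ↦ hx.deriv.symm) ?_
  have hid : Tendsto (fun x : ℝ ↦ x) (𝓝[≠] 0) (𝓝 0) := nhdsWithin_le_nhds
  have hlog_one_sub : Tendsto (fun x ↦ log (1 - g x)) (𝓝[≠] 0) (𝓝 0) := by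
    simpa using ((tendsto_const_nhds (x := (1 : ℝ))).sub hg).log (by norm_num)
  have hw' := hw.tendsto.mono_left (nhdsWithin_le_nhds (s := {0}ᶜ))
  have := ((hlog_one_sub.mul (hid.mul hw')).sub
    (tendsto_mul_log_sq_mul_nhdsNE hv.continuousAt hv₀ hw)).div_const (log 2)
  simp only [zero_mul, sub_zero, zero_div] at this
  refine this.congr fun x ↦ ?_
  simp only [g]
  ring

theorem tendsto_deriv_mul_one_sub_binEnt_sq_mul {a v : ℝ → ℝ} (ha : ContDiffAt ℝ 1 a 0)
    (hv : ContDiffAt ℝ 1 v 0) (hv₀ : v 0 ≠ 0) :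
    (∀ᶠ x in 𝓝[≠] 0, DifferentiableAt ℝ (fun x ↦ a x * (1 - binEnt (x ^ 2 * v x))) x) ∧
      Tendsto (deriv fun x ↦ a x * (1 - binEnt (x ^ 2 * v x))) (𝓝[≠] 0) (𝓝 (deriv a 0)) := by
  obtain ⟨hdiff, hlim⟩ := tendsto_deriv_binEnt_sq_mul hv hv₀
  have hderiv : ∀ᶠ x in 𝓝[≠] 0, HasDerivAt (fun x ↦ a x * (1 - binEnt (x ^ 2 * v x)))
      (deriv a x * (1 - binEnt (x ^ 2 * v x)) +
        a x * -deriv (fun x ↦ binEnt (x ^ 2 * v x)) x) x := by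
    filter_upwards [hdiff, (ha.eventually_hasDerivAt one_ne_zero).filter_mono nhdsWithin_le_nhds]
      with x hx hax
    exact hax.mul (hx.hasDerivAt.const_sub 1)
  refine ⟨hderiv.mono fun x hx ↦ hx.differentiableAt,
    Tendsto.congr' (hderiv.mono fun x hx ↦ hx.deriv.symm) ?_⟩
  have hbinEnt : Tendsto (fun x ↦ binEnt (x ^ 2 * v x)) (𝓝[≠] 0) (𝓝 0) := by
    have : ContinuousAt (fun x ↦ binEnt (x ^ 2 * v x)) 0 :=
      continuous_binEnt.continuousAt.comp ((continuousAt_id.pow 2).mul hv.continuousAt)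
    simpa [binEnt] using this.tendsto.mono_left nhdsWithin_le_nhds
  have := (((ha.continuousAt_deriv one_ne_zero).tendsto.mono_left nhdsWithin_le_nhds).mul
    (hbinEnt.const_sub 1)).add ((ha.continuousAt.tendsto.mono_left nhdsWithin_le_nhds).mul hlim.neg)
  simpa using this

theorem pbar_eq_mul_geom_sum (q : ℝ) (j : ℕ) :
    pbar q j = q * ∑ m ∈ range (2 ^ j), (1 - 2 * q) ^ m := by
  have := geom_sum_mul (1 - 2 * q) (2 ^ j)
  unfold pbar
  linarith

theorem pbar_zero (j : ℕ) : pbar 0 j = 0 := by simp [pbar]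

theorem qbar_zero (j : ℕ) : qbar 0 j = 0 := by simp [qbar, pbar_zero]

theorem contDiff_pbar (n : WithTop ℕ∞) (j : ℕ) : ContDiff ℝ n fun q ↦ pbar q j := by
  unfold pbar
  fun_prop

theorem hasDerivAt_pbar_zero (j : ℕ) : HasDerivAt (fun q ↦ pbar q j) (2 ^ j) 0 := by
  unfold pbar
  simpa using (((hasDerivAt_id (0 : ℝ)).const_mul 2).const_sub 1 |>.pow (2 ^ j)).const_sub 1
    |>.div_const 2

theorem contDiffAt_qbar (n : WithTop ℕ∞) (j : ℕ) : ContDiffAt ℝ n (fun q ↦ qbar q j) 0 :=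
  ((contDiff_pbar n (j - 1)).contDiffAt.pow 2).div
    (contDiffAt_const.sub (contDiff_pbar n j).contDiffAt) (by simp [pbar_zero])

/-- `qbar q j / q ^ 2`, extended continuously to `q = 0`. -/
noncomputable def qbarDivSq (j : ℕ) (q : ℝ) : ℝ :=
  (∑ m ∈ range (2 ^ (j - 1)), (1 - 2 * q) ^ m) ^ 2 / (1 - pbar q j)

theorem qbar_eq_sq_mul_qbarDivSq (q : ℝ) (j : ℕ) : qbar q j = q ^ 2 * qbarDivSq j q := by
  rw [qbar, qbarDivSq, pbar_eq_mul_geom_sum q (j - 1), mul_pow, mul_div_assoc]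

theorem qbarDivSq_zero_ne_zero (j : ℕ) : qbarDivSq j 0 ≠ 0 := by
  simp [qbarDivSq, pbar_zero]

theorem contDiffAt_qbarDivSq (n : WithTop ℕ∞) (j : ℕ) : ContDiffAt ℝ n (qbarDivSq j) 0 :=
  ContDiffAt.div (by fun_prop) (contDiffAt_const.sub (contDiff_pbar n j).contDiffAt)
    (by simp [pbar_zero])

noncomputable def rateWeight (s i : ℕ) (q : ℝ) : ℝ :=
  pbar q s / 2 ^ s * ∏ j ∈ range i, (1 - 2 * qbar q (s - j))

theorem rateF_eq_sum (s : ℕ) : rateF s = fun q ↦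
    ∑ i ∈ range s, rateWeight s i q * (1 - binEnt (q ^ 2 * qbarDivSq (s - i) q)) := by
  ext q
  simp only [rateF, rateWeight, mul_sum, mul_assoc, qbar_eq_sq_mul_qbarDivSq]

theorem contDiffAt_prod_one_sub_two_mul_qbar (n : WithTop ℕ∞) (s i : ℕ) :
    ContDiffAt ℝ n (fun q ↦ ∏ j ∈ range i, (1 - 2 * qbar q (s - j))) 0 :=
  contDiffAt_prod fun _ _ ↦ contDiffAt_const.sub (contDiffAt_const.mul (contDiffAt_qbar n _))

theorem contDiffAt_rateWeight (n : WithTop ℕ∞) (s i : ℕ) : ContDiffAt ℝ n (rateWeight s i) 0 :=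
  ((contDiff_pbar n s).contDiffAt.div_const _).mul (contDiffAt_prod_one_sub_two_mul_qbar n s i)

theorem deriv_rateWeight_zero (s i : ℕ) : deriv (rateWeight s i) 0 = 1 := by
  have hprod := (contDiffAt_prod_one_sub_two_mul_qbar 1 s i).differentiableAt one_ne_zero
  have : HasDerivAt (rateWeight s i) _ 0 :=
    ((hasDerivAt_pbar_zero s).div_const (2 ^ s)).fun_mul hprod.hasDerivAt
  rw [this.deriv]
  simp [pbar_zero, qbar_zero]

theorem rateF_deriv_at_zero_general (s : ℕ) :
    (∃ ε > (0 : ℝ), ∀ x ∈ Set.Ioo (0 : ℝ) ε, DifferentiableAt ℝ (rateF s) x) ∧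
    Filter.Tendsto (deriv (rateF s)) (nhdsWithin 0 (Set.Ioi 0)) (nhds (s : ℝ)) := by
  set φ : ℕ → ℝ → ℝ := fun i q ↦ rateWeight s i q * (1 - binEnt (q ^ 2 * qbarDivSq (s - i) q))
  have hφ : ∀ i ∈ range s, (∀ᶠ x in 𝓝[>] 0, DifferentiableAt ℝ (φ i) x) ∧
      Tendsto (deriv (φ i)) (𝓝[>] 0) (𝓝 1) := fun i _ ↦ by
    have := tendsto_deriv_mul_one_sub_binEnt_sq_mul (contDiffAt_rateWeight 1 s i)
      (contDiffAt_qbarDivSq 1 (s - i)) (qbarDivSq_zero_ne_zero _)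
    rw [deriv_rateWeight_zero] at this
    exact ⟨this.1.filter_mono (nhdsGT_le_nhdsNE 0), this.2.mono_left (nhdsGT_le_nhdsNE 0)⟩
  have hdiff : ∀ᶠ x in 𝓝[>] 0, ∀ i ∈ range s, DifferentiableAt ℝ (φ i) x :=
    (eventually_all_finset _).2 fun i hi ↦ (hφ i hi).1
  rw [rateF_eq_sum]
  constructor
  · obtain ⟨ε, hε, hsub⟩ := mem_nhdsGT_iff_exists_Ioo_subset.1 hdiff
    exact ⟨ε, hε, fun x hx ↦ DifferentiableAt.fun_sum (hsub hx)⟩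
  · have := tendsto_finsetSum (range s) fun i hi ↦ (hφ i hi).2
    simp only [sum_const, card_range, nsmul_eq_mul, mul_one] at this
    exact this.congr' (hdiff.mono fun x hx ↦ (deriv_fun_sum hx).symm)

/-- Second claim of Proposition 1: for `s ≥ 1`, the function `f` is differentiable on a right
neighborhood of `0` and `lim_{q→0⁺} f′(q) = s`; the slope of the tangent at `q = 0` of this
lower bound on the OT capacity of the BSC grows without bound as `s` increases. -/
theorem rateF_deriv_at_zero (s : ℕ) (hs : 1 ≤ s) :
    (∃ ε > (0 : ℝ), ∀ x ∈ Set.Ioo (0 : ℝ) ε, DifferentiableAt ℝ (rateF s) x) ∧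
    Filter.Tendsto (deriv (rateF s)) (nhdsWithin 0 (Set.Ioi 0)) (nhds (s : ℝ)) :=
  rateF_deriv_at_zero_general s
end
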